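/- arXiv:2603.25246 — 3 statements merged into one kernel-verified Lean document; each statement's English description precedes it below -/
import Mathlib

section
/- Let N ≥ 1 be an integer, let τ > 0, let t_0, …, t_N be N+1 pairwise distinct points in [0, τ], and let 𝔐 be the (N+1)×(N+1) matrix with entries 𝔐_{ij} = b_{i,N}(t_j/τ). Let p : ℝ → ℝ^n have all coordinates polynomial of degree at most N, and suppose V ∈ ℝ^{n×(N+1)} is a matrix with columns V_0, …, V_N such that p(t) = Σ_{i=0}^{N} b_{i,N}(t/τ) · V_i for all t ∈ [0, τ]. Let W ∈ ℝ^{n×(N+1)} be the matrix whose j-th column is p(t_j). Then V is the unique such coefficient matrix and V = W · 𝔐^{-1}. -/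
/-- The Bernstein basis polynomial `b_{j,N}(x) = (N choose j) x^j (1-x)^(N-j)`. -/
noncomputable def bern (N j : ℕ) (x : ℝ) : ℝ :=
  (N.choose j : ℝ) * x ^ j * (1 - x) ^ (N - j)

lemma bern_eval (N j : ℕ) (x : ℝ) :
    bern N j x = (bernsteinPolynomial ℝ N j).eval x := by
  simp [bern, bernsteinPolynomial, mul_assoc]

open bernsteinPolynomial in
lemma bernstein_li_real (n : ℕ) :
    LinearIndependent ℝ fun ν : Fin (n + 1) => bernsteinPolynomial ℝ n ν := by
  suffices H : ∀ k, k ≤ n + 1 →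
      LinearIndependent ℝ fun ν : Fin k => bernsteinPolynomial ℝ n ν from
    H (n + 1) le_rfl
  intro k h
  induction' k with k ih
  · apply linearIndependent_empty_type
  · apply linearIndependent_fin_succ'.mpr
    fconstructor
    · exact ih (le_of_lt h)
    · clear ih
      simp only [Nat.succ_eq_add_one, add_le_add_iff_right] at h
      simp only [Fin.val_last, Fin.init_def]
      dsimp
      apply Submodule.notMem_span_of_apply_notMem_span_image
        (@Polynomial.derivative ℝ _ ^ (n - k))
      simp only [not_exists, not_and, Submodule.mem_map, Submodule.span_image _]
      intro p m
      apply_fun Polynomial.eval (1 : ℝ)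
      simp only [Module.End.pow_apply]
      suffices (Polynomial.derivative^[n - k] p).eval 1 = 0 by
        rw [this]
        exact (iterate_derivative_at_1_ne_zero ℝ n k h).symm
      refine Submodule.span_induction ?_ ?_ ?_ ?_ m
      · simp only [Set.mem_range, forall_exists_index, forall_apply_eq_imp_iff]
        rintro ⟨a, w⟩; simp only [Fin.val_mk]
        rw [iterate_derivative_at_1_eq_zero_of_lt ℝ n ((tsub_lt_tsub_iff_left_of_le h).mpr w)]
      · simp
      · intro x y _ _ hx hy; simp [hx, hy]
      · intro a x _ h; simp [h]

lemma bernsteinPolynomial_natDegree_le (n ν : ℕ) :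
    (bernsteinPolynomial ℝ n ν).natDegree ≤ n := by
  rcases le_or_gt ν n with h | h
  · unfold bernsteinPolynomial
    open Polynomial in
    refine le_trans (Polynomial.natDegree_mul_le) ?_
    have h1 : ((n.choose ν : ℝ[X]) * Polynomial.X ^ ν).natDegree ≤ ν := by
      refine le_trans (Polynomial.natDegree_mul_le) ?_
      simp [Polynomial.natDegree_X_pow]
    have h2 : ((1 - Polynomial.X : ℝ[X]) ^ (n - ν)).natDegree ≤ n - ν := by
      refine le_trans (Polynomial.natDegree_pow_le) ?_
      have : (1 - Polynomial.X : ℝ[X]).natDegree ≤ 1 := by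
        refine le_trans (Polynomial.natDegree_sub_le _ _) ?_; simp
      nlinarith
    omega
  · rw [bernsteinPolynomial.eq_zero_of_lt ℝ h]; simp

/-- With `𝔐 i j = b_{i,N}(t_j/τ)` for pairwise distinct nodes
`t_0, …, t_N ∈ [0,τ]`, if `p : ℝ → ℝ^n` has polynomial coordinates of degree at most
`N` and `V` is a coefficient matrix with `p(t) = ∑_i b_{i,N}(t/τ) V_i` on `[0,τ]`,
then, with `W` the matrix whose `j`-th column is `p(t_j)`, `V` is the unique such
coefficient matrix and `V = W ⬝ 𝔐⁻¹`. -/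
theorem bernstein_coefficients_unique_eq_mul_inv
    (N n : ℕ) (hN : 1 ≤ N) (τ : ℝ) (hτ : 0 < τ)
    (t : Fin (N + 1) → ℝ) (ht : Function.Injective t)
    (htmem : ∀ j, t j ∈ Set.Icc (0 : ℝ) τ)
    (M : Matrix (Fin (N + 1)) (Fin (N + 1)) ℝ)
    (hM : ∀ i j, M i j = bern N i.val (t j / τ))
    (p : ℝ → Fin n → ℝ)
    (hp : ∀ i : Fin n, ∃ q : Polynomial ℝ, q.degree ≤ N ∧ ∀ s : ℝ, p s i = q.eval s)
    (V : Matrix (Fin n) (Fin (N + 1)) ℝ)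
    (hV : ∀ s ∈ Set.Icc (0 : ℝ) τ, ∀ r : Fin n,
      p s r = ∑ i : Fin (N + 1), bern N i.val (s / τ) * V r i)
    (W : Matrix (Fin n) (Fin (N + 1)) ℝ)
    (hW : ∀ (r : Fin n) (j : Fin (N + 1)), W r j = p (t j) r) :
    V = W * M⁻¹ ∧
      ∀ V' : Matrix (Fin n) (Fin (N + 1)) ℝ,
        (∀ s ∈ Set.Icc (0 : ℝ) τ, ∀ r : Fin n,
          p s r = ∑ i : Fin (N + 1), bern N i.val (s / τ) * V' r i) → V' = V := by
  -- M is invertible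
  have hdet : IsUnit M.det := by
    rw [isUnit_iff_ne_zero]
    intro h0
    obtain ⟨v, hv0, hvM⟩ := Matrix.exists_vecMul_eq_zero_iff.mpr h0
    set q : Polynomial ℝ := ∑ i : Fin (N + 1), v i • bernsteinPolynomial ℝ N i with hq
    have hqeval : ∀ j : Fin (N + 1), q.eval (t j / τ) = 0 := by
      intro j
      have := congrFun hvM j
      simp only [Matrix.vecMul, dotProduct, hM, Pi.zero_apply] at this
      rw [hq]
      simp only [Polynomial.eval_finset_sum, Polynomial.eval_smul, smul_eq_mul]
      rw [← this]
      exact Finset.sum_congr rfl fun i _ => by rw [bern_eval]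
    have hinj : Function.Injective (fun j : Fin (N + 1) => t j / τ) := by
      intro a b hab
      exact ht (by field_simp at hab; exact hab)
    have hqdeg : q.natDegree < Fintype.card (Fin (N + 1)) := by
      rw [Fintype.card_fin]
      have : q.natDegree ≤ N := by
        refine Polynomial.natDegree_sum_le_of_forall_le _ _ fun i _ => ?_
        exact le_trans (Polynomial.natDegree_smul_le _ _)
          (bernsteinPolynomial_natDegree_le N (i : ℕ))
      omega
    have hq0 : q = 0 :=
      Polynomial.eq_zero_of_natDegree_lt_card_of_eval_eq_zero q hinj hqeval hqdeg
    have := Fintype.linearIndependent_iff.mp (bernstein_li_real N) v (by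
      rw [← hq0, hq])
    exact hv0 (funext this)
  -- V * M = W
  have hVM : V * M = W := by
    ext r j
    rw [Matrix.mul_apply, hW r j, hV (t j) (htmem j) r]
    exact Finset.sum_congr rfl fun i _ => by rw [hM i j]; ring
  constructor
  · rw [← hVM, Matrix.mul_nonsing_inv_cancel_right _ _ hdet]
  · intro V' hV'
    have hVM' : V' * M = W := by
      ext r j
      rw [Matrix.mul_apply, hW r j, hV' (t j) (htmem j) r]
      exact Finset.sum_congr rfl fun i _ => by rw [hM i j]; ring
    calc V' = V' * M * M⁻¹ := (Matrix.mul_nonsing_inv_cancel_right _ _ hdet).symm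
      _ = V * M * M⁻¹ := by rw [hVM', hVM]
      _ = V := Matrix.mul_nonsing_inv_cancel_right _ _ hdet
end

section
/- Let Q ∈ ℝ^{p×q}, R ∈ ℝ^{p×r}, T_1 ∈ ℝ^{p×s}, and T_2 ∈ ℝ^{w×r} be real matrices. Then the following are equivalent: (i) there exists a matrix X ∈ ℝ^{s×w} such that the column space of R + T_1·X·T_2 is contained in the column space of Q; (ii) there exist vectors v_1 ∈ ℝ^{q·r} and v_2 ∈ ℝ^{s·w} such that (I_r ⊗ Q)·v_1 − (T_2ᵀ ⊗ T_1)·v_2 = vec(R). Moreover, for any such pair (v_1, v_2), the matrix X ∈ ℝ^{s×w} with vec(X) = v_2 satisfies the inclusion in (i). -/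
open scoped Kronecker Matrix

/-- Column-stacking vectorization: `vec(M) (j, i) = M i j` (column-major order). -/
def vecM {α β : Type*} (M : Matrix α β ℝ) : β × α → ℝ := fun ji => M ji.2 ji.1

/-! Both conditions say that `R = Q * Y - T₁ * X * T₂` for some `Y`: the columns of a matrix `M` lie in the
column space of `Q` exactly when `M = Q * Y`, and `vec (A * X * B) = (Bᵀ ⊗ₖ A) *ᵥ vec X` turns this
matrix equation into the Kronecker system, with `v₁ = vec Y` and `v₂ = vec X`. -/

namespace Matrix

variable {K m n o p q : Type*} [Fintype n] [Fintype o]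

theorem range_mulVecLin_le_iff_exists_mul_eq [CommSemiring K]
    (M : Matrix m o K) (Q : Matrix m n K) :
    LinearMap.range M.mulVecLin ≤ LinearMap.range Q.mulVecLin ↔
      ∃ Y : Matrix n o K, Q * Y = M := by
  constructor
  · intro h
    rw [range_mulVecLin, Submodule.span_le] at h
    have hcol : ∀ j, ∃ y, Q *ᵥ y = M.col j := fun j => h ⟨j, rfl⟩
    choose y hy using hcol
    exact ⟨(of y)ᵀ, ext fun i j => congrFun (hy j) i⟩
  · rintro ⟨Y, rfl⟩
    rw [mulVecLin_mul]
    exact LinearMap.range_comp_le_range _ _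

section CommRing

variable [CommRing K]

theorem range_add_mul_mul_le_iff_exists (C : Matrix m o K) (Q : Matrix m n K)
    (T₁ : Matrix m p K) (X : Matrix p q K) (T₂ : Matrix q o K) [Fintype p] [Fintype q] :
    LinearMap.range (C + T₁ * X * T₂).mulVecLin ≤ LinearMap.range Q.mulVecLin ↔
      ∃ Y : Matrix n o K, Q * Y - T₁ * X * T₂ = C := by
  simp only [range_mulVecLin_le_iff_exists_mul_eq, sub_eq_iff_eq_add]

theorem one_kronecker_mulVec_vec_sub_eq_iff [DecidableEq o] [Fintype p] [Fintype q]
    (Q : Matrix m n K) (T₁ : Matrix m p K) (T₂ : Matrix q o K)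
    (Y : Matrix n o K) (X : Matrix p q K) (C : Matrix m o K) :
    (1 ⊗ₖ Q) *ᵥ vec Y - (T₂ᵀ ⊗ₖ T₁) *ᵥ vec X = vec C ↔ Q * Y - T₁ * X * T₂ = C := by
  rw [kronecker_mulVec_vec, kronecker_mulVec_vec, transpose_one, Matrix.mul_one,
    transpose_transpose, ← vec_sub, vec_inj]

end CommRing

end Matrix

open Matrix in
/-- There exists `X` with `colspace(R + T₁·X·T₂) ⊆ colspace(Q)` iff
there exist vectors `v₁, v₂` with `(I ⊗ Q)·v₁ − (T₂ᵀ ⊗ T₁)·v₂ = vec(R)`; moreover,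
for any such `(v₁, v₂)`, the matrix `X` with `vec(X) = v₂` realizes the inclusion. -/
theorem range_inclusion_iff_kronecker_solvable (p q r s w : ℕ)
    (Q : Matrix (Fin p) (Fin q) ℝ) (R : Matrix (Fin p) (Fin r) ℝ)
    (T₁ : Matrix (Fin p) (Fin s) ℝ) (T₂ : Matrix (Fin w) (Fin r) ℝ) :
    ((∃ X : Matrix (Fin s) (Fin w) ℝ,
        LinearMap.range (Matrix.mulVecLin (R + T₁ * X * T₂)) ≤
          LinearMap.range (Matrix.mulVecLin Q)) ↔
      ∃ (v₁ : Fin r × Fin q → ℝ) (v₂ : Fin w × Fin s → ℝ),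
        ((1 : Matrix (Fin r) (Fin r) ℝ) ⊗ₖ Q).mulVec v₁ -
          (T₂ᵀ ⊗ₖ T₁).mulVec v₂ = vecM R) ∧
    ∀ (v₁ : Fin r × Fin q → ℝ) (v₂ : Fin w × Fin s → ℝ),
      ((1 : Matrix (Fin r) (Fin r) ℝ) ⊗ₖ Q).mulVec v₁ -
        (T₂ᵀ ⊗ₖ T₁).mulVec v₂ = vecM R →
      LinearMap.range
          (Matrix.mulVecLin (R + T₁ * (Matrix.of fun i j => v₂ (j, i)) * T₂)) ≤
        LinearMap.range (Matrix.mulVecLin Q) := by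
  have hsolution : ∀ (v₁ : Fin r × Fin q → ℝ) (v₂ : Fin w × Fin s → ℝ),
      (1 ⊗ₖ Q) *ᵥ v₁ - (T₂ᵀ ⊗ₖ T₁) *ᵥ v₂ = vecM R →
      LinearMap.range (R + T₁ * (of fun i j => v₂ (j, i)) * T₂).mulVecLin ≤
        LinearMap.range Q.mulVecLin := fun v₁ v₂ h =>
    (range_add_mul_mul_le_iff_exists _ _ _ _ _).2
      ⟨of fun k j => v₁ (j, k), (one_kronecker_mulVec_vec_sub_eq_iff _ _ _ _ _ _).1 h⟩
  refine ⟨⟨fun ⟨X, hX⟩ => ?_, fun ⟨v₁, v₂, h⟩ => ⟨_, hsolution v₁ v₂ h⟩⟩, hsolution⟩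
  obtain ⟨Y, hY⟩ := (range_add_mul_mul_le_iff_exists _ _ _ _ _).1 hX
  exact ⟨vec Y, vec X, (one_kronecker_mulVec_vec_sub_eq_iff _ _ _ _ _ _).2 hY⟩
end

section
/- For every integer N ≥ 1, the polynomial P_N + P_{N+1}, where P_n denotes the n-th Legendre polynomial, has N+1 pairwise distinct real roots, all lying in the half-open interval [−1, 1); in particular, x = −1 is one of these roots. -/
/-!
Since `d/dx (x² - 1)^(N+1) = 2(N+1) x (x² - 1)^N`, Rodrigues' formula gives
`P_N + P_{N+1} = D^N[(x + 1)(x² - 1)^N] / (2^N N!)`. The polynomial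
`(x + 1)(x² - 1)^N = (x + 1)^(N+1) (x - 1)^N` vanishes to order at least `N` at both `±1`, so
Rolle's theorem, applied to the roots found so far together with `±1`, shows inductively that
its `k`-th derivative has at least `k` roots in `(-1, 1)` for every `k ≤ N`. The `N`-th
derivative also vanishes at `-1`, where the order is `N + 1`.
-/

open Polynomial

/-- The `n`-th Legendre polynomial, via Rodrigues' formula:
`P_n = (1/(2^n n!)) · dⁿ/dxⁿ [(x² − 1)ⁿ]`. -/
noncomputable def legendreP (n : ℕ) : Polynomial ℝ :=
  ((1 : ℝ) / (2 ^ n * n.factorial)) • (derivative^[n] ((X ^ 2 - 1) ^ n))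

open Set

theorem Continuous.exists_finset_deriv_eq_zero_between {f : ℝ → ℝ} (hf : Continuous f)
    (S : Finset ℝ) (hS : ∀ x ∈ S, f x = 0) :
    ∃ T : Finset ℝ, S.card ≤ T.card + 1 ∧
      ∀ y ∈ T, deriv f y = 0 ∧ ∃ a ∈ S, ∃ b ∈ S, a < y ∧ y < b := by
  induction S using Finset.induction_on_max with
  | empty => exact ⟨∅, by simp, by simp⟩
  | insert a s hlt ih =>
    obtain ⟨T, hcard, hT⟩ := ih fun x hx ↦ hS x (Finset.mem_insert_of_mem hx)
    rcases s.eq_empty_or_nonempty with rfl | hne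
    · exact ⟨∅, by simp, by simp⟩
    set m := s.max' hne
    have hm : m ∈ s := s.max'_mem hne
    obtain ⟨c, ⟨hmc, hca⟩, hc⟩ := exists_deriv_eq_zero (hlt m hm) hf.continuousOn
      ((hS m (Finset.mem_insert_of_mem hm)).trans (hS a (Finset.mem_insert_self a s)).symm)
    have hcT : c ∉ T := fun hc ↦ by
      obtain ⟨-, -, -, b, hb, -, hcb⟩ := hT c hc
      exact (hcb.trans_le (s.le_max' b hb)).not_gt hmc
    refine ⟨insert c T, ?_, ?_⟩
    · rw [Finset.card_insert_of_notMem fun h ↦ (hlt a h).false,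
        Finset.card_insert_of_notMem hcT]
      omega
    · simp only [Finset.forall_mem_insert, Finset.exists_mem_insert]
      refine ⟨⟨hc, Or.inr ⟨m, hm, Or.inl ⟨hmc, hca⟩⟩⟩, fun y hy ↦ ?_⟩
      obtain ⟨hy0, a', ha', b, hb, hay, hyb⟩ := hT y hy
      exact ⟨hy0, Or.inr ⟨a', ha', Or.inr ⟨b, hb, hay, hyb⟩⟩⟩

namespace Polynomial

theorem isRoot_iterate_derivative_of_pow_dvd {R : Type*} [CommRing R] {p : R[X]} {t : R}
    {n k : ℕ} (h : (X - C t) ^ n ∣ p) (hk : k < n) : (derivative^[k] p).IsRoot t :=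
  dvd_iff_isRoot.mp <| (dvd_pow_self _ (Nat.sub_ne_zero_of_lt hk)).trans
    (pow_sub_dvd_iterate_derivative_of_pow_dvd k h)

theorem exists_finset_roots_iterate_derivative_Ioo (p : ℝ[X]) {a b : ℝ} (hab : a < b) {n : ℕ}
    (ha : (X - C a) ^ n ∣ p) (hb : (X - C b) ^ n ∣ p) {k : ℕ} (hk : k ≤ n) :
    ∃ S : Finset ℝ, ↑S ⊆ Ioo a b ∧ k ≤ S.card ∧
      ∀ x ∈ S, (derivative^[k] p).IsRoot x := by
  induction k with
  | zero => exact ⟨∅, by simp, le_rfl, by simp⟩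
  | succ k ih =>
    obtain ⟨S, hSab, hcard, hroots⟩ := ih (by omega)
    have haS : a ∉ S := fun h ↦ (hSab h).1.false
    have hbS : b ∉ S := fun h ↦ (hSab h).2.false
    obtain ⟨T, hTcard, hT⟩ := (derivative^[k] p).continuous.exists_finset_deriv_eq_zero_between
      (insert a (insert b S)) (by
        simp only [Finset.forall_mem_insert]
        exact ⟨isRoot_iterate_derivative_of_pow_dvd ha (by omega),
          isRoot_iterate_derivative_of_pow_dvd hb (by omega), hroots⟩)
    have hendpoints : ∀ x ∈ insert a (insert b S), x ∈ Icc a b := by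
      simp only [Finset.forall_mem_insert]
      exact ⟨left_mem_Icc.2 hab.le, right_mem_Icc.2 hab.le,
        fun x hx ↦ Ioo_subset_Icc_self (hSab hx)⟩
    refine ⟨T, fun y hy ↦ ?_, ?_, fun y hy ↦ ?_⟩
    · obtain ⟨-, a', ha', b', hb', hay, hyb⟩ := hT y hy
      exact ⟨(hendpoints a' ha').1.trans_lt hay, hyb.trans_le (hendpoints b' hb').2⟩
    · rw [Finset.card_insert_of_notMem (by simp [hab.ne, haS]),
        Finset.card_insert_of_notMem hbS] at hTcard
      omega
    · rw [Function.iterate_succ_apply', IsRoot, ← Polynomial.deriv]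
      exact (hT y hy).1

theorem X_add_one_mul_X_sq_sub_one_pow {R : Type*} [CommRing R] (N : ℕ) :
    ((X + 1) * (X ^ 2 - 1) ^ N : R[X]) = (X - C (-1)) ^ (N + 1) * (X - C 1) ^ N := by
  rw [C_neg, C_1, show (X ^ 2 - 1 : R[X]) = (X - 1) * (X + 1) by ring, mul_pow]
  ring

end Polynomial

theorem Finset.exists_injective_fin_of_mem_of_le_card {α : Type*} {s : Finset α} {a : α}
    (ha : a ∈ s) {n : ℕ} (hn : n + 1 ≤ s.card) :
    ∃ t : Fin (n + 1) → α, Function.Injective t ∧ (∀ i, t i ∈ s) ∧ ∃ i, t i = a := by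
  obtain ⟨u, hau, hus, hu⟩ :=
    exists_subsuperset_card_eq (singleton_subset_iff.2 ha) (by simp) hn
  let e := u.equivFinOfCardEq hu
  refine ⟨fun i ↦ e.symm i, Subtype.val_injective.comp e.symm.injective,
    fun i ↦ hus (e.symm i).2, e ⟨a, hau (mem_singleton_self a)⟩, by simp⟩

theorem legendreP_add_legendreP_succ (N : ℕ) :
    legendreP N + legendreP (N + 1) =
      ((1 : ℝ) / (2 ^ N * N.factorial)) • derivative^[N] ((X + 1) * (X ^ 2 - 1) ^ N) := by
  have hderiv : derivative ((X ^ 2 - 1) ^ (N + 1) : ℝ[X]) =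
      C (2 * (N + 1 : ℝ)) * (X * (X ^ 2 - 1) ^ N) := by
    rw [derivative_pow_succ, derivative_sub, derivative_X_sq, derivative_one, C_mul]
    ring
  have hconst : (1 : ℝ) / (2 ^ (N + 1) * (N + 1).factorial) * (2 * (N + 1 : ℝ)) =
      1 / (2 ^ N * N.factorial) := by
    rw [Nat.factorial_succ]
    push_cast
    field_simp
    ring
  rw [legendreP, legendreP, Function.iterate_succ_apply, hderiv, iterate_derivative_C_mul,
    add_mul, one_mul, iterate_map_add, smul_eq_C_mul, smul_eq_C_mul, smul_eq_C_mul, ← mul_assoc,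
    ← C_mul, hconst]
  ring

theorem legendre_sum_roots_general (N : ℕ) :
    ∃ t : Fin (N + 1) → ℝ, Function.Injective t ∧
      (∀ i, t i ∈ Set.Ico (-1 : ℝ) 1 ∧ (legendreP N + legendreP (N + 1)).eval (t i) = 0) ∧
      ∃ i, t i = -1 := by
  have hdvd_neg_one : (X - C (-1)) ^ (N + 1) ∣ ((X + 1) * (X ^ 2 - 1) ^ N : ℝ[X]) :=
    ⟨_, X_add_one_mul_X_sq_sub_one_pow N⟩
  have hdvd_one : (X - C 1) ^ N ∣ ((X + 1) * (X ^ 2 - 1) ^ N : ℝ[X]) :=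
    Dvd.intro_left _ (X_add_one_mul_X_sq_sub_one_pow N).symm
  obtain ⟨S, hS, hcard, hroots⟩ := exists_finset_roots_iterate_derivative_Ioo _
    (neg_one_lt_zero.trans one_pos) ((pow_dvd_pow _ N.le_succ).trans hdvd_neg_one) hdvd_one le_rfl
  have hroots_Ico : ∀ x ∈ insert (-1) S, x ∈ Ico (-1 : ℝ) 1 ∧
      (derivative^[N] ((X + 1) * (X ^ 2 - 1) ^ N)).IsRoot x := by
    simp only [Finset.forall_mem_insert]
    exact ⟨⟨⟨le_rfl, by norm_num⟩,
        isRoot_iterate_derivative_of_pow_dvd hdvd_neg_one N.lt_succ_self⟩,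
      fun x hx ↦ ⟨Ioo_subset_Ico_self (hS hx), hroots x hx⟩⟩
  have hcard_insert : N + 1 ≤ (insert (-1) S).card := by
    rw [Finset.card_insert_of_notMem fun h ↦ (hS h).1.false]
    omega
  obtain ⟨t, ht, hmem, i, hi⟩ :=
    Finset.exists_injective_fin_of_mem_of_le_card (Finset.mem_insert_self (-1) S) hcard_insert
  refine ⟨t, ht, fun j ↦ ⟨(hroots_Ico _ (hmem j)).1, ?_⟩, i, hi⟩
  rw [legendreP_add_legendreP_succ, eval_smul, (hroots_Ico _ (hmem j)).2, smul_zero]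

/-- For every `N ≥ 1`, the polynomial `P_N + P_{N+1}` has `N+1`
pairwise distinct real roots, all lying in `[−1, 1)`; in particular `x = −1` is one
of these roots. -/
theorem legendre_sum_roots (N : ℕ) (hN : 1 ≤ N) :
    ∃ t : Fin (N + 1) → ℝ, Function.Injective t ∧
      (∀ i, t i ∈ Set.Ico (-1 : ℝ) 1 ∧ (legendreP N + legendreP (N + 1)).eval (t i) = 0) ∧
      ∃ i, t i = -1 :=
  legendre_sum_roots_general N
end
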